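/- arXiv:2410.23723 — 6 statements merged into one kernel-verified Lean document; each statement's English description precedes it below -/
import Mathlib

section
/- For every odd integer k ≥ 3, there exists an intersecting family F of k-element subsets of [2k] such that every (k-1)-element subset of [2k] can be written as F \ F' for some F, F' ∈ F. Concretely, the family G of all k-subsets {a_1,…,a_k} of [2k] whose element sum is odd has this property. -/
/-!
Two disjoint members of the family would partition `[2k]`, so their odd sums would add up to
`1 + ⋯ + 2k = k(2k+1)`, which is odd because `k` is. Given a `(k-1)`-set `X`, its complement has
`k + 1` elements, hence contains an `a` and a `b` of opposite parities (each parity class of `[2k]`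
has only `k` elements). Choosing `a` with `∑ X + a` odd and `b` with `∑ X + b` even, both
`insert a X` and `([2k] \ X).erase b` have odd sum, and their difference is `X`.
-/

open Finset

theorem two_mul_sum_Icc_one (n : ℕ) : 2 * ∑ x ∈ Icc 1 n, x = n * (n + 1) := by
  induction n with
  | zero => simp
  | succ n ih =>
    rw [sum_Icc_succ_top (by omega), mul_add, ih]
    ring

theorem odd_sum_Icc_one_two_mul {k : ℕ} (hk : Odd k) : Odd (∑ x ∈ Icc 1 (2 * k), x) := by
  have h := two_mul_sum_Icc_one (2 * k)
  have hsum : ∑ x ∈ Icc 1 (2 * k), x = k * (2 * k + 1) := by linarith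
  exact hsum ▸ hk.mul (odd_two_mul_add_one k)

theorem card_filter_mod_two_le {k : ℕ} (p : ℕ) {S : Finset ℕ} (hS : S ⊆ Icc 1 (2 * k)) :
    #(S.filter (· % 2 = p)) ≤ k := by
  have h := card_le_card_of_injOn (fun x => (x + 1) / 2) (s := S.filter (· % 2 = p))
    (t := Icc 1 k)
    (fun x hx => by
      have := hS (mem_filter.mp hx).1
      simp only [coe_Icc, Set.mem_Icc, mem_Icc] at this ⊢
      omega)
    (fun x hx y hy (hxy : (x + 1) / 2 = (y + 1) / 2) => by
      have := (mem_filter.mp hx).2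
      have := (mem_filter.mp hy).2
      omega)
  simpa using h

theorem exists_mem_mod_two_eq {k p : ℕ} (hp : p < 2) {S : Finset ℕ} (hS : S ⊆ Icc 1 (2 * k))
    (hcard : k < #S) : ∃ x ∈ S, x % 2 = p := by
  by_contra! h
  have hsub : S ⊆ S.filter (· % 2 = 1 - p) := fun x hx =>
    mem_filter.mpr ⟨hx, by have := h x hx; omega⟩
  have := (card_le_card hsub).trans (card_filter_mod_two_le (1 - p) hS)
  omega

theorem inter_nonempty_of_odd_sum {α : Type*} [DecidableEq α] {U A B : Finset α} {f : α → ℕ}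
    (hA : A ⊆ U) (hB : B ⊆ U) (hcard : #U ≤ #A + #B) (hU : Odd (∑ x ∈ U, f x))
    (hfA : Odd (∑ x ∈ A, f x)) (hfB : Odd (∑ x ∈ B, f x)) : (A ∩ B).Nonempty := by
  by_contra h
  have hdisj : Disjoint A B := disjoint_iff_inter_eq_empty.mpr (not_nonempty_iff_eq_empty.mp h)
  have hunion : A ∪ B = U :=
    eq_of_subset_of_card_le (union_subset hA hB) (by rwa [card_union_of_disjoint hdisj])
  rw [← hunion, sum_union hdisj] at hU
  exact Nat.not_even_iff_odd.mpr hU (hfA.add_odd hfB)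

theorem insert_sdiff_erase_sdiff {α : Type*} [DecidableEq α] {U X : Finset α} {a b : α}
    (ha : a ∈ U) (haX : a ∉ X) (hab : a ≠ b) : insert a X \ (U \ X).erase b = X := by
  ext x
  simp only [mem_sdiff, mem_insert, mem_erase]
  constructor
  · rintro ⟨rfl | hx, hx'⟩
    · exact absurd ⟨hab, ha, haX⟩ hx'
    · exact hx
  · exact fun hx => ⟨Or.inr hx, fun h => h.2.2 hx⟩

def oddSumSets (n k : ℕ) : Finset (Finset ℕ) :=
  ((Icc 1 n).powersetCard k).filter (fun S => Odd (∑ x ∈ S, x))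

theorem mem_oddSumSets {n k : ℕ} {A : Finset ℕ} :
    A ∈ oddSumSets n k ↔ (A ⊆ Icc 1 n ∧ #A = k) ∧ Odd (∑ x ∈ A, x) := by
  rw [oddSumSets, mem_filter, mem_powersetCard]

theorem oddSumSets_inter_nonempty {k : ℕ} (hk : Odd k) {A B : Finset ℕ}
    (hA : A ∈ oddSumSets (2 * k) k) (hB : B ∈ oddSumSets (2 * k) k) : (A ∩ B).Nonempty := by
  rw [mem_oddSumSets] at hA hB
  exact inter_nonempty_of_odd_sum hA.1.1 hB.1.1 (by simp [hA.1.2, hB.1.2]; omega)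
    (odd_sum_Icc_one_two_mul hk) hA.2 hB.2

theorem exists_oddSumSets_sdiff_eq {k : ℕ} (hk : Odd k) {X : Finset ℕ}
    (hX : X ⊆ Icc 1 (2 * k)) (hXcard : #X = k - 1) :
    ∃ A ∈ oddSumSets (2 * k) k, ∃ B ∈ oddSumSets (2 * k) k, X = A \ B := by
  have hk_pos := hk.pos
  set C := Icc 1 (2 * k) \ X
  have hCsub : C ⊆ Icc 1 (2 * k) := sdiff_subset
  have hCcard : #C = k + 1 := by
    rw [card_sdiff_of_subset hX, Nat.card_Icc, hXcard]
    omega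
  obtain ⟨a, haC, ha⟩ := exists_mem_mod_two_eq (p := (∑ x ∈ X, x + 1) % 2) (by omega) hCsub
    (by omega)
  obtain ⟨b, hbC, hb⟩ := exists_mem_mod_two_eq (p := (∑ x ∈ X, x) % 2) (by omega) hCsub
    (by omega)
  have hab : a ≠ b := by rintro rfl; omega
  have haX : a ∉ X := (mem_sdiff.mp haC).2
  have hsumC : ∑ x ∈ C, x + ∑ x ∈ X, x = ∑ x ∈ Icc 1 (2 * k), x := sum_sdiff hX
  have hsumCb : b + ∑ x ∈ C.erase b, x = ∑ x ∈ C, x := add_sum_erase C (fun x => x) hbC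
  obtain ⟨c, hc⟩ := odd_sum_Icc_one_two_mul hk
  refine ⟨insert a X, ?_, C.erase b, ?_, (insert_sdiff_erase_sdiff (hCsub haC) haX hab).symm⟩
  · rw [mem_oddSumSets, card_insert_of_notMem haX, sum_insert haX, Nat.odd_iff]
    exact ⟨⟨insert_subset (hCsub haC) hX, by omega⟩, by omega⟩
  · rw [mem_oddSumSets, card_erase_of_mem hbC, Nat.odd_iff]
    exact ⟨⟨(erase_subset _ _).trans hCsub, by omega⟩, by omega⟩

theorem stmt_0_general (k : ℕ) (hodd : Odd k) :
    ∃ F : Finset (Finset ℕ),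
      (∀ A ∈ F, A ⊆ Finset.Icc 1 (2 * k) ∧ A.card = k) ∧
      (∀ A ∈ F, ∀ B ∈ F, (A ∩ B).Nonempty) ∧
      (∀ X ⊆ Finset.Icc 1 (2 * k), X.card = k - 1 →
        ∃ A ∈ F, ∃ B ∈ F, X = A \ B) ∧
      F = ((Finset.Icc 1 (2 * k)).powersetCard k).filter
            (fun S => Odd (∑ x ∈ S, x)) :=
  ⟨oddSumSets (2 * k) k, fun _ hA => (mem_oddSumSets.mp hA).1,
    fun _ hA _ hB => oddSumSets_inter_nonempty hodd hA hB,
    fun _ hX hXcard => exists_oddSumSets_sdiff_eq hodd hX hXcard, rfl⟩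

/-- For every odd `k ≥ 3`, the family `G` of all `k`-subsets of `[2k]` with odd
element sum is intersecting and every `(k-1)`-subset of `[2k]` is a difference
of two members of `G`. -/
theorem stmt_0 (k : ℕ) (hk : 3 ≤ k) (hodd : Odd k) :
    ∃ F : Finset (Finset ℕ),
      (∀ A ∈ F, A ⊆ Finset.Icc 1 (2 * k) ∧ A.card = k) ∧
      (∀ A ∈ F, ∀ B ∈ F, (A ∩ B).Nonempty) ∧
      (∀ X ⊆ Finset.Icc 1 (2 * k), X.card = k - 1 →
        ∃ A ∈ F, ∃ B ∈ F, X = A \ B) ∧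
      F = ((Finset.Icc 1 (2 * k)).powersetCard k).filter
            (fun S => Odd (∑ x ∈ S, x)) :=
  stmt_0_general k hodd
end

section
/- For every even integer k ≥ 4, there exists an intersecting family F of k-element subsets of [2k] such that D(F) equals the union over j = 0,…,k-1 of all j-element subsets of [2k]. -/
namespace Stmt2Aux

open Finset

def UU (k : ℕ) : Finset ℕ := Finset.Icc 1 (2*k)
def VV (k : ℕ) : Finset ℕ := Finset.Icc 2 (2*k)
def WW (k : ℕ) : Finset ℕ := Finset.Icc 2 (k+1)
def OO (k : ℕ) : Finset ℕ := Finset.Icc 2 k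

def isEadd (k : ℕ) (S : Finset ℕ) : Prop := ∃ o ∈ OO k, S = ((OO k).erase o) ∪ {o + k}

def inG (k : ℕ) (S : Finset ℕ) : Prop :=
  S ≠ OO k ∧ (isEadd k S ∨ (S ∩ WW k).card % 2 = 1)

def mem' (k : ℕ) (A : Finset ℕ) : Prop :=
  if 1 ∈ A then inG k (A.erase 1) else ¬ inG k (VV k \ A)

noncomputable def Fam (k : ℕ) : Finset (Finset ℕ) :=
  @Finset.filter _ (mem' k) (Classical.decPred _) ((UU k).powersetCard k)

variable {k : ℕ}

lemma card_UU : (UU k).card = 2*k := by simp [UU]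
lemma card_VV (hk : 4 ≤ k) : (VV k).card = 2*k - 1 := by
  simp [VV, Nat.card_Icc]
lemma card_WW (hk : 4 ≤ k) : (WW k).card = k := by
  simp [WW, Nat.card_Icc]
lemma card_OO (hk : 4 ≤ k) : (OO k).card = k - 1 := by
  simp [OO, Nat.card_Icc]

lemma VV_subset_UU : VV k ⊆ UU k := by
  intro x hx; simp only [VV, UU, mem_Icc] at *; omega
lemma WW_subset_VV (hk : 4 ≤ k) : WW k ⊆ VV k := by
  intro x hx; simp only [WW, VV, mem_Icc] at *; omega
lemma OO_subset_WW : OO k ⊆ WW k := by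
  intro x hx; simp only [OO, WW, mem_Icc] at *; omega

lemma one_notMem_VV : (1 : ℕ) ∉ VV k := by simp [VV]
lemma one_mem_UU (hk : 4 ≤ k) : (1 : ℕ) ∈ UU k := by simp [UU]; omega

lemma OO_inter_WW : OO k ∩ WW k = OO k :=
  inter_eq_left.mpr OO_subset_WW

lemma card_inter_OO (hS : S = OO k) (hk : 4 ≤ k) : ((S ∩ WW k).card = k - 1) := by
  subst hS; rw [OO_inter_WW, card_OO hk]

/-- intersection card of an Eadd set with W -/
lemma ok_notMem_WW {o : ℕ} (ho : o ∈ OO k) : o + k ∉ WW k := by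
  simp only [OO, WW, mem_Icc] at *; omega

lemma ok_notMem_OO {o : ℕ} (ho : o ∈ OO k) : o + k ∉ OO k := by
  simp only [OO, mem_Icc] at *; omega

lemma eadd_inter (h : isEadd k S) : ∃ o ∈ OO k, S ∩ WW k = (OO k).erase o ∧
    S = ((OO k).erase o) ∪ {o + k} := by
  obtain ⟨o, ho, rfl⟩ := h
  refine ⟨o, ho, ?_, rfl⟩
  rw [union_inter_distrib_right, singleton_inter_of_notMem (ok_notMem_WW ho),
    union_empty, inter_eq_left]
  exact (erase_subset _ _).trans OO_subset_WW

lemma eadd_inter_card (hk : 4 ≤ k) {S : Finset ℕ} (h : isEadd k S) :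
    (S ∩ WW k).card = k - 2 := by
  obtain ⟨o, ho, hint, -⟩ := eadd_inter h
  rw [hint, card_erase_of_mem ho, card_OO hk]; omega

lemma eadd_card (hk : 4 ≤ k) {S : Finset ℕ} (h : isEadd k S) : S.card = k - 1 := by
  obtain ⟨o, ho, -, hS⟩ := eadd_inter h
  rw [hS, card_union_of_disjoint, card_erase_of_mem ho, card_OO hk, card_singleton]
  · omega
  · simp only [disjoint_singleton_right, mem_erase]
    exact fun hh => ok_notMem_OO ho hh.2

lemma inG_of_odd (hk : 4 ≤ k) {S : Finset ℕ} (hodd : (S ∩ WW k).card % 2 = 1)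
    (hne : S ≠ OO k) : inG k S := ⟨hne, Or.inr hodd⟩

lemma not_inG_B {S : Finset ℕ} (heven : (S ∩ WW k).card % 2 = 0)
    (hnE : ¬ isEadd k S) (hne : S ≠ OO k) : ¬ inG k S := by
  rintro ⟨h1, h2 | h3⟩
  · exact hnE h2
  · omega

lemma not_inG_card (hk : 4 ≤ k) {S : Finset ℕ} (heven : (S ∩ WW k).card % 2 = 0)
    (hnE : ¬ isEadd k S) (hcne : (S ∩ WW k).card ≠ k - 1) : ¬ inG k S := by
  refine not_inG_B heven hnE fun hO => hcne ?_
  exact card_inter_OO hO hk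

lemma not_isEadd_card (hk : 4 ≤ k) {S : Finset ℕ} (h : (S ∩ WW k).card ≠ k - 2) :
    ¬ isEadd k S := fun hE => h (eadd_inter_card hk hE)

lemma WW_erase_top : (WW k).erase (k+1) = OO k := by
  ext x; simp only [mem_erase, WW, OO, mem_Icc]; omega

lemma ne_OO_of_outside {S : Finset ℕ} {x : ℕ} (hx : x ∈ S) (hxW : x ∉ WW k) :
    S ≠ OO k := by
  intro h; rw [h] at hx
  exact hxW (OO_subset_WW hx)

/-- at most one way to complete a set to an Eadd set -/
lemma eadd_insert_unique (hk : 4 ≤ k) {N : Finset ℕ} {e₁ e₂ : ℕ}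
    (h1 : e₁ ∉ N) (h2 : e₂ ∉ N) (hne : e₁ ≠ e₂)
    (hE1 : isEadd k (insert e₁ N)) (hE2 : isEadd k (insert e₂ N)) : False := by
  have hNc : N.card = k - 2 := by
    have := eadd_card hk hE1
    rw [card_insert_of_notMem h1] at this; omega
  obtain ⟨o₁, ho₁, hS1⟩ := hE1
  obtain ⟨o₂, ho₂, hS2⟩ := hE2
  by_cases hoo : o₁ = o₂
  · subst hoo
    have : e₁ ∈ insert e₂ N := by
      rw [hS2, ← hS1]; exact mem_insert_self _ _
    rcases mem_insert.mp this with h | h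
    · exact hne h
    · exact h1 h
  · have hbO₁ := mem_Icc.mp ho₁
    have hbO₂ := mem_Icc.mp ho₂
    have key : N ⊆ ((OO k).erase o₁).erase o₂ := by
      intro x hx
      have hx1 : x ∈ ((OO k).erase o₁) ∪ {o₁ + k} := by
        rw [← hS1]; exact mem_insert_of_mem hx
      have hx2 : x ∈ ((OO k).erase o₂) ∪ {o₂ + k} := by
        rw [← hS2]; exact mem_insert_of_mem hx
      rcases mem_union.mp hx1 with h | h
      · rcases mem_union.mp hx2 with h' | h'
        · exact mem_erase.mpr ⟨(mem_erase.mp h').1, h⟩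
        · exfalso
          have hxO := mem_Icc.mp (mem_of_mem_erase h)
          rw [mem_singleton] at h'; omega
      · exfalso
        rw [mem_singleton] at h
        rcases mem_union.mp hx2 with h' | h'
        · have hxO := mem_Icc.mp (mem_of_mem_erase h'); omega
        · rw [mem_singleton] at h'; omega
    have hc2 : o₂ ∈ (OO k).erase o₁ := mem_erase.mpr ⟨Ne.symm hoo, ho₂⟩
    have := card_le_card key
    rw [hNc, card_erase_of_mem hc2, card_erase_of_mem ho₁, card_OO hk] at this
    omega

lemma eadd_erase_unique (hk : 4 ≤ k) {R : Finset ℕ} {u₁ u₂ : ℕ}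
    (h1 : u₁ ∈ R) (h2 : u₂ ∈ R) (hne : u₁ ≠ u₂)
    (hE1 : isEadd k (R.erase u₁)) (hE2 : isEadd k (R.erase u₂)) : False := by
  set N := (R.erase u₁).erase u₂ with hN
  have hm2 : u₂ ∈ R.erase u₁ := mem_erase.mpr ⟨Ne.symm hne, h2⟩
  have hm1 : u₁ ∈ R.erase u₂ := mem_erase.mpr ⟨hne, h1⟩
  have e1 : R.erase u₁ = insert u₂ N := (insert_erase hm2).symm
  have e2 : R.erase u₂ = insert u₁ N := by
    rw [hN, erase_right_comm]; exact (insert_erase hm1).symm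
  rw [e1] at hE1; rw [e2] at hE2
  refine eadd_insert_unique hk ?_ ?_ (Ne.symm hne) hE1 hE2
  · exact notMem_erase _ _
  · rw [hN, erase_right_comm]; exact notMem_erase _ _

lemma mem_Fam {A : Finset ℕ} : A ∈ Fam k ↔ A ⊆ UU k ∧ A.card = k ∧ mem' k A := by
  simp [Fam, Finset.mem_filter, Finset.mem_powersetCard, and_assoc]

/-- complementation: exactly one of A, U \ A is in the family -/
lemma mem'_compl (hk : 4 ≤ k) {A : Finset ℕ} (hA : A ⊆ UU k) :
    (mem' k (UU k \ A) ↔ ¬ mem' k A) := by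
  by_cases h1A : 1 ∈ A
  · have h1c : 1 ∉ UU k \ A := by simp [h1A]
    have hid : VV k \ (UU k \ A) = A.erase 1 := by
      ext x
      rw [mem_sdiff, mem_erase]
      constructor
      · rintro ⟨hxV, hxU⟩
        have hx2 : 2 ≤ x ∧ x ≤ 2*k := mem_Icc.mp hxV
        have hxA : x ∈ A := by
          by_contra hxA
          exact hxU (mem_sdiff.mpr ⟨VV_subset_UU hxV, hxA⟩)
        exact ⟨by omega, hxA⟩
      · rintro ⟨hx1, hxA⟩
        have hb := mem_Icc.mp (hA hxA)
        refine ⟨mem_Icc.mpr ⟨by omega, hb.2⟩, fun hc => (mem_sdiff.mp hc).2 hxA⟩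
    rw [mem', mem', if_neg h1c, if_pos h1A, hid]
  · have h1c : 1 ∈ UU k \ A := mem_sdiff.mpr ⟨one_mem_UU hk, h1A⟩
    have hid : (UU k \ A).erase 1 = VV k \ A := by
      ext x
      simp only [mem_erase, mem_sdiff, UU, VV, mem_Icc]
      constructor
      · rintro ⟨hx1, ⟨hl, hr⟩, hxA⟩; exact ⟨⟨by omega, hr⟩, hxA⟩
      · rintro ⟨⟨h2, hr⟩, hxA⟩; exact ⟨by omega, ⟨by omega, hr⟩, hxA⟩
    rw [mem', mem', if_pos h1c, if_neg h1A, hid, not_not]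

lemma compl_mem_Fam (hk : 4 ≤ k) {A : Finset ℕ} (hA : A ⊆ UU k) (hAc : A.card = k)
    (h : A ∉ Fam k) : UU k \ A ∈ Fam k := by
  rw [mem_Fam] at h ⊢
  refine ⟨sdiff_subset, ?_, ?_⟩
  · rw [card_sdiff_of_subset hA, card_UU, hAc]; omega
  · rw [mem'_compl hk hA]
    intro hm; exact h ⟨hA, hAc, hm⟩

lemma intersecting (hk : 4 ≤ k) {A B : Finset ℕ} (hA : A ∈ Fam k) (hB : B ∈ Fam k) :
    (A ∩ B).Nonempty := by
  obtain ⟨hAU, hAc, hAm⟩ := mem_Fam.mp hA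
  obtain ⟨hBU, hBc, hBm⟩ := mem_Fam.mp hB
  by_contra h
  rw [not_nonempty_iff_eq_empty] at h
  have hBsub : B ⊆ UU k \ A := by
    intro x hx
    refine mem_sdiff.mpr ⟨hBU hx, fun hxA => ?_⟩
    have : x ∈ A ∩ B := mem_inter.mpr ⟨hxA, hx⟩
    rw [h] at this; exact notMem_empty x this
  have hBeq : B = UU k \ A := by
    apply eq_of_subset_of_card_le hBsub
    rw [card_sdiff_of_subset hAU, card_UU, hAc, hBc]; omega
  have := (mem'_compl hk hAU).mp (by rw [← hBeq]; exact hBm)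
  exact this hAm

/-- extension lemma: any small subset of V extends to an inG set -/
lemma extend (hk : 4 ≤ k) (hek : k % 2 = 0) {Y : Finset ℕ} (hY : Y ⊆ VV k)
    (hYc : Y.card ≤ k - 2) :
    ∃ A', Y ⊆ A' ∧ A' ⊆ VV k ∧ A'.card = k - 1 ∧ inG k A' := by
  have hyout := card_sdiff_add_card_inter Y (WW k)
  have hVW : ((VV k) \ WW k).card = k - 1 := by
    rw [card_sdiff_of_subset (WW_subset_VV hk), card_VV hk, card_WW hk]; omega
  have havailset : (VV k \ WW k) ∩ Y = Y \ WW k := by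
    ext x; rw [mem_inter, mem_sdiff, mem_sdiff]
    exact ⟨fun h => ⟨h.2, h.1.2⟩, fun h => ⟨⟨hY h.1, h.2⟩, h.1⟩⟩
  have havail : ((VV k \ WW k) \ Y).card = k - 1 - (Y \ WW k).card := by
    have h := card_sdiff_add_card_inter (VV k \ WW k) Y
    rw [havailset, hVW] at h
    omega
  have houtle : (Y \ WW k).card ≤ Y.card := card_le_card sdiff_subset
  have hyle : (Y ∩ WW k).card ≤ Y.card := card_le_card inter_subset_left
  by_cases hpar : (Y ∩ WW k).card % 2 = 1
  · obtain ⟨Fill, hFsub, hFc⟩ := Finset.exists_subset_card_eq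
      (s := (VV k \ WW k) \ Y) (n := k - 1 - Y.card) (by omega)
    have hFd : ∀ x ∈ Fill, x ∈ VV k ∧ x ∉ WW k ∧ x ∉ Y := by
      intro x hx
      have h1 := mem_sdiff.mp (hFsub hx)
      have h2 := mem_sdiff.mp h1.1
      exact ⟨h2.1, h2.2, h1.2⟩
    have hAW : (Y ∪ Fill) ∩ WW k = Y ∩ WW k := by
      rw [union_inter_distrib_right]
      have h1 : Fill ∩ WW k = ∅ := by
        rw [← disjoint_iff_inter_eq_empty]
        exact disjoint_left.mpr fun x hxF hxW => (hFd x hxF).2.1 hxW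
      rw [h1, union_empty]
    refine ⟨Y ∪ Fill, subset_union_left, ?_, ?_, ?_, ?_⟩
    · exact union_subset hY fun x hx => (hFd x hx).1
    · rw [card_union_of_disjoint
        (disjoint_left.mpr fun x hx hxF => (hFd x hxF).2.2 hx), hFc]
      omega
    · intro hO
      have hcc : ((Y ∪ Fill) ∩ WW k).card = k - 1 := by
        rw [hO, OO_inter_WW, card_OO hk]
      rw [hAW] at hcc; omega
    · exact Or.inr (by rw [hAW]; exact hpar)
  · have he : ∃ e, e ∈ WW k ∧ e ∉ Y ∧ (k+1 ∈ Y ∨ e = k+1) := by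
      by_cases hk1 : k+1 ∈ Y
      · have hWYc : (WW k \ Y).card = k - (Y ∩ WW k).card := by
          have h := card_sdiff_add_card_inter (WW k) Y
          rw [inter_comm, card_WW hk] at h
          omega
        have hne : (WW k \ Y).Nonempty := card_pos.mp (by omega)
        obtain ⟨e, hee⟩ := hne
        exact ⟨e, (mem_sdiff.mp hee).1, (mem_sdiff.mp hee).2, Or.inl hk1⟩
      · refine ⟨k+1, ?_, hk1, Or.inr rfl⟩
        simp only [WW, mem_Icc]; omega
    obtain ⟨e, heW, heY, hkey⟩ := he
    obtain ⟨Fill, hFsub, hFc⟩ := Finset.exists_subset_card_eq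
      (s := (VV k \ WW k) \ Y) (n := k - 2 - Y.card) (by omega)
    have hFd : ∀ x ∈ Fill, x ∈ VV k ∧ x ∉ WW k ∧ x ∉ Y := by
      intro x hx
      have h1 := mem_sdiff.mp (hFsub hx)
      have h2 := mem_sdiff.mp h1.1
      exact ⟨h2.1, h2.2, h1.2⟩
    have hAW : (insert e Y ∪ Fill) ∩ WW k = insert e (Y ∩ WW k) := by
      rw [union_inter_distrib_right]
      have h1 : Fill ∩ WW k = ∅ := by
        rw [← disjoint_iff_inter_eq_empty]
        exact disjoint_left.mpr fun x hxF hxW => (hFd x hxF).2.1 hxW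
      rw [h1, union_empty, insert_inter_of_mem heW]
    have hAWc : ((insert e Y ∪ Fill) ∩ WW k).card = (Y ∩ WW k).card + 1 := by
      rw [hAW, card_insert_of_notMem (fun hc => heY (mem_inter.mp hc).1)]
    have hk1A : k + 1 ∈ insert e Y ∪ Fill := by
      rcases hkey with h | h
      · exact mem_union.mpr (Or.inl (mem_insert_of_mem h))
      · subst h; exact mem_union.mpr (Or.inl (mem_insert_self _ _))
    refine ⟨insert e Y ∪ Fill, (subset_insert _ _).trans subset_union_left, ?_, ?_, ?_, ?_⟩
    · intro x hx
      rcases mem_union.mp hx with h | h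
      · rcases mem_insert.mp h with h | h
        · subst h; exact WW_subset_VV hk heW
        · exact hY h
      · exact (hFd x h).1
    · rw [card_union_of_disjoint, card_insert_of_notMem heY, hFc]
      · omega
      · refine disjoint_left.mpr fun x hx hxF => ?_
        rcases mem_insert.mp hx with h | h
        · subst h; exact (hFd x hxF).2.1 heW
        · exact (hFd x hxF).2.2 h
    · intro hO
      rw [hO] at hk1A
      exact absurd (mem_Icc.mp hk1A).2 (by omega)
    · exact Or.inr (by rw [hAWc]; omega)

/-- P2 core for full-size sets -/
lemma P2core (hk : 4 ≤ k) (hek : k % 2 = 0) {R : Finset ℕ} (hR : R ⊆ VV k)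
    (hRc : R.card = k) : ∃ u ∈ R, ¬ inG k (R.erase u) := by
  have hsplit := card_sdiff_add_card_inter R (WW k)
  have hrle : (R ∩ WW k).card ≤ k := by
    calc (R ∩ WW k).card ≤ (WW k).card := card_le_card inter_subset_right
    _ = k := card_WW hk
  by_cases hpar : (R ∩ WW k).card % 2 = 1
  · -- pick u in R ∩ W avoiding the at most one Eadd drop
    have hpool : 1 ≤ (R ∩ WW k).card := by omega
    have hgood : ∃ u ∈ R ∩ WW k, ¬ isEadd k (R.erase u) := by
      by_cases h2 : 2 ≤ (R ∩ WW k).card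
      · obtain ⟨u₁, u₂, hu₁, hu₂, hne⟩ := one_lt_card_iff.mp h2
        by_cases hE : isEadd k (R.erase u₁)
        · refine ⟨u₂, hu₂, fun hE2 => ?_⟩
          exact eadd_erase_unique hk (mem_inter.mp hu₁).1 (mem_inter.mp hu₂).1 hne hE hE2
        · exact ⟨u₁, hu₁, hE⟩
      · -- (R∩W).card = 1 : erase gives card 0 ≠ k-2
        obtain ⟨u, hu⟩ := card_pos.mp (by omega : 0 < (R ∩ WW k).card)
        refine ⟨u, hu, not_isEadd_card hk ?_⟩
        rw [erase_inter, card_erase_of_mem hu]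
        omega
    obtain ⟨u, huRW, hnE⟩ := hgood
    obtain ⟨huR, huW⟩ := mem_inter.mp huRW
    refine ⟨u, huR, not_inG_card hk ?_ hnE ?_⟩ <;>
      rw [erase_inter, card_erase_of_mem huRW] <;> omega
  · by_cases hrk : (R ∩ WW k).card = k
    · -- R = WW k
      have hRsub : R ⊆ WW k := by
        have h1 : R ∩ WW k = R := eq_of_subset_of_card_le inter_subset_left (by omega)
        rw [← h1]; exact inter_subset_right
      have hRW : R = WW k := eq_of_subset_of_card_le hRsub (by rw [card_WW hk, hRc])
      refine ⟨k+1, ?_, ?_⟩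
      · rw [hRW]; simp only [WW, mem_Icc]; omega
      · rw [hRW, WW_erase_top]
        rintro ⟨h1, -⟩; exact h1 rfl
    · -- r even < k : pool = R \ W has ≥ 2 elements
      have hpoolc : 2 ≤ (R \ WW k).card := by omega
      obtain ⟨u₁, u₂, hu₁, hu₂, hne⟩ := one_lt_card_iff.mp hpoolc
      have hgood : ∃ u ∈ R \ WW k, ¬ isEadd k (R.erase u) := by
        by_cases hE : isEadd k (R.erase u₁)
        · refine ⟨u₂, hu₂, fun hE2 => ?_⟩
          exact eadd_erase_unique hk (mem_sdiff.mp hu₁).1 (mem_sdiff.mp hu₂).1 hne hE hE2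
        · exact ⟨u₁, hu₁, hE⟩
      obtain ⟨u, huRW, hnE⟩ := hgood
      obtain ⟨huR, huW⟩ := mem_sdiff.mp huRW
      have hZW : R.erase u ∩ WW k = R ∩ WW k := by
        rw [erase_inter, erase_eq_of_notMem (fun hc => huW (mem_inter.mp hc).2)]
      refine ⟨u, huR, not_inG_B (by rw [hZW]; omega) hnE ?_⟩
      -- the other outside element witnesses ≠ OO
      have hu₂' : u₂ ∈ R.erase u ∨ u₁ ∈ R.erase u := by
        by_cases h : u = u₁
        · subst h; exact Or.inl (mem_erase.mpr ⟨Ne.symm hne, (mem_sdiff.mp hu₂).1⟩)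
        · exact Or.inr (mem_erase.mpr ⟨fun hh => h hh.symm, (mem_sdiff.mp hu₁).1⟩)
      rcases hu₂' with h | h
      · exact ne_OO_of_outside h (mem_sdiff.mp hu₂).2
      · exact ne_OO_of_outside h (mem_sdiff.mp hu₁).2

lemma P2 (hk : 4 ≤ k) (hek : k % 2 = 0) {X : Finset ℕ} (hX : X ⊆ UU k)
    (hXc : X.card ≤ k - 1) : ∃ A ∈ Fam k, X ⊆ A := by
  by_cases hcase : X.card ≤ k - 2 ∨ 1 ∈ X
  · have hYV : X.erase 1 ⊆ VV k := by
      intro x hx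
      obtain ⟨hx1, hxX⟩ := mem_erase.mp hx
      have hb := mem_Icc.mp (hX hxX)
      simp only [VV, mem_Icc]; omega
    have hYc : (X.erase 1).card ≤ k - 2 := by
      rcases hcase with h | h
      · calc (X.erase 1).card ≤ X.card := card_le_card (erase_subset _ _)
        _ ≤ k - 2 := h
      · rw [card_erase_of_mem h]; omega
    obtain ⟨A', hYA', hA'V, hA'c, hA'G⟩ := extend hk hek hYV hYc
    have h1A' : 1 ∉ A' := fun hc => one_notMem_VV (hA'V hc)
    refine ⟨insert 1 A', mem_Fam.mpr ⟨?_, ?_, ?_⟩, ?_⟩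
    · intro x hx
      rcases mem_insert.mp hx with h | h
      · subst h; exact one_mem_UU hk
      · exact VV_subset_UU (hA'V h)
    · rw [card_insert_of_notMem h1A', hA'c]; omega
    · rw [mem', if_pos (mem_insert_self 1 A'), erase_insert h1A']
      exact hA'G
    · intro x hxX
      by_cases hx1 : x = 1
      · subst hx1; exact mem_insert_self _ _
      · exact mem_insert_of_mem (hYA' (mem_erase.mpr ⟨hx1, hxX⟩))
  · push_neg at hcase
    obtain ⟨hsz, h1X⟩ := hcase
    have hszX : X.card = k - 1 := by omega
    have hXV : X ⊆ VV k := by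
      intro x hxX
      have hb := mem_Icc.mp (hX hxX)
      have : x ≠ 1 := fun hc => h1X (hc ▸ hxX)
      simp only [VV, mem_Icc]; omega
    have hRc : (VV k \ X).card = k := by
      rw [card_sdiff_of_subset hXV, card_VV hk]; omega
    obtain ⟨u, huR, hu⟩ := P2core hk hek (sdiff_subset : VV k \ X ⊆ VV k) hRc
    obtain ⟨huV, huX⟩ := mem_sdiff.mp huR
    have hu1 : u ≠ 1 := fun hc => one_notMem_VV (hc ▸ huV)
    refine ⟨insert u X, mem_Fam.mpr ⟨?_, ?_, ?_⟩, subset_insert _ _⟩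
    · intro x hx
      rcases mem_insert.mp hx with h | h
      · subst h; exact VV_subset_UU huV
      · exact hX h
    · rw [card_insert_of_notMem huX]; omega
    · have h1ni : 1 ∉ insert u X := by
        intro hc
        rcases mem_insert.mp hc with h | h
        · exact hu1 h.symm
        · exact h1X h
      rw [mem', if_neg h1ni, sdiff_insert]
      exact hu

lemma P1coreA (hk : 4 ≤ k) (hek : k % 2 = 0) {C : Finset ℕ} (hC : C ⊆ VV k)
    (hCc : C.card = k) : ∃ e ∈ C, inG k (C.erase e) := by
  have hsplit := card_sdiff_add_card_inter C (WW k)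
  have hcpos : 1 ≤ (C ∩ WW k).card := by
    by_contra h
    have h0 : (C ∩ WW k).card = 0 := by omega
    have hCsub : C ⊆ VV k \ WW k := by
      intro x hx
      refine mem_sdiff.mpr ⟨hC hx, fun hxW => ?_⟩
      have : x ∈ C ∩ WW k := mem_inter.mpr ⟨hx, hxW⟩
      rw [card_eq_zero.mp h0] at this
      exact notMem_empty x this
    have := card_le_card hCsub
    rw [hCc, card_sdiff_of_subset (WW_subset_VV hk), card_VV hk, card_WW hk] at this
    omega
  by_cases hpar : (C ∩ WW k).card % 2 = 0
  · -- drop from C ∩ W, get odd intersection; avoid the at most one O-drop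
    have h2 : 2 ≤ (C ∩ WW k).card := by omega
    obtain ⟨e₁, e₂, he₁, he₂, hne⟩ := one_lt_card_iff.mp h2
    have hgood : ∃ e ∈ C ∩ WW k, C.erase e ≠ OO k := by
      by_cases hO : C.erase e₁ = OO k
      · refine ⟨e₂, he₂, fun hO2 => hne ?_⟩
        have h1 : e₂ ∉ C.erase e₂ := notMem_erase _ _
        rw [hO2, ← hO] at h1
        have he₂C : e₂ ∈ C := (mem_inter.mp he₂).1
        by_contra hc
        exact h1 (mem_erase.mpr ⟨fun h => hc h.symm, he₂C⟩)
      · exact ⟨e₁, he₁, hO⟩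
    obtain ⟨e, heCW, hO⟩ := hgood
    obtain ⟨heC, heW⟩ := mem_inter.mp heCW
    refine ⟨e, heC, ?_, Or.inr ?_⟩
    · exact hO
    · rw [erase_inter, card_erase_of_mem heCW]; omega
  · -- c odd : drop from C \ W if possible avoiding O; else Eadd trick
    have hout : 1 ≤ (C \ WW k).card := by
      have : (C ∩ WW k).card ≤ k := by
        calc (C ∩ WW k).card ≤ (WW k).card := card_le_card inter_subset_right
        _ = k := card_WW hk
      omega
    by_cases hEx : ∃ e ∈ C \ WW k, C.erase e ≠ OO k
    · obtain ⟨e, heCW, hO⟩ := hEx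
      obtain ⟨heC, heW⟩ := mem_sdiff.mp heCW
      refine ⟨e, heC, hO, Or.inr ?_⟩
      rw [erase_inter, erase_eq_of_notMem (fun hc => heW (mem_inter.mp hc).2)]
      omega
    · push_neg at hEx
      obtain ⟨e, heCW⟩ := card_pos.mp (by omega : 0 < (C \ WW k).card)
      obtain ⟨heC, heW⟩ := mem_sdiff.mp heCW
      have hCO : C = insert e (OO k) := by
        rw [← hEx e heCW, insert_erase heC]
      have heV := mem_Icc.mp (hC heC)
      have heb : k + 2 ≤ e ∧ e ≤ 2*k := by
        simp only [WW, mem_Icc] at heW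
        omega
      have hoO : e - k ∈ OO k := by simp only [OO, mem_Icc]; omega
      have honeq : e - k ≠ e := by omega
      refine ⟨e - k, ?_, ?_, Or.inl ⟨e - k, hoO, ?_⟩⟩
      · rw [hCO]; exact mem_insert_of_mem hoO
      · exact ne_OO_of_outside (mem_erase.mpr ⟨fun h => honeq h.symm, heC⟩) heW
      · -- C.erase (e-k) = (OO.erase (e-k)) ∪ {e-k+k}
        rw [hCO, erase_insert_of_ne (fun hc => honeq hc.symm)]
        have hek' : e - k + k = e := by omega
        rw [hek', insert_eq, union_comm]

lemma pick_nonEadd (hk : 4 ≤ k) {N P : Finset ℕ} (hP : 2 ≤ P.card)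
    (hPN : ∀ x ∈ P, x ∉ N) : ∃ e ∈ P, ¬ isEadd k (insert e N) := by
  obtain ⟨e₁, e₂, he₁, he₂, hne⟩ := one_lt_card_iff.mp hP
  by_cases hE : isEadd k (insert e₁ N)
  · exact ⟨e₂, he₂, fun hE2 => eadd_insert_unique hk (hPN e₁ he₁) (hPN e₂ he₂) hne hE hE2⟩
  · exact ⟨e₁, he₁, hE⟩

lemma P1coreB (hk : 4 ≤ k) (hek : k % 2 = 0) {C : Finset ℕ} (hC : C ⊆ VV k)
    (hCc : C.card = k + 1) : ∃ e ∈ C, ¬ inG k (insert e (VV k \ C)) := by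
  set N := VV k \ C with hN
  have hNc : N.card = k - 2 := by
    rw [hN, card_sdiff_of_subset hC, card_VV hk, hCc]; omega
  have hCN : ∀ x ∈ C, x ∉ N := fun x hx hc => (mem_sdiff.mp hc).2 hx
  have hWC : (WW k) \ C = (WW k) ∩ N := by
    ext x
    rw [mem_sdiff, mem_inter, hN, mem_sdiff]
    exact ⟨fun h => ⟨h.1, WW_subset_VV hk h.1, h.2⟩, fun h => ⟨h.1, h.2.2⟩⟩
  have hWsplit := card_sdiff_add_card_inter (WW k) C
  have hCsplit := card_sdiff_add_card_inter C (WW k)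
  have hNW : (WW k ∩ N).card = (N ∩ WW k).card := by rw [inter_comm]
  have hCWcomm : (WW k ∩ C).card = (C ∩ WW k).card := by rw [inter_comm]
  have hqN : (N ∩ WW k).card ≤ k - 2 := by
    calc (N ∩ WW k).card ≤ N.card := card_le_card inter_subset_left
    _ = k - 2 := hNc
  have hCW : (C ∩ WW k).card = k - (N ∩ WW k).card := by
    rw [card_WW hk] at hWsplit
    rw [hWC, hNW, hCWcomm] at hWsplit
    omega
  by_cases hpar : (N ∩ WW k).card % 2 = 0
  · -- pick e outside W
    have hpool : 1 ≤ (C \ WW k).card := by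
      have : (C ∩ WW k).card ≤ k := by omega
      omega
    have hgood : ∃ e ∈ C \ WW k, ¬ isEadd k (insert e N) := by
      by_cases hq : (N ∩ WW k).card = k - 2
      · refine pick_nonEadd hk ?_ fun x hx => hCN x (mem_sdiff.mp hx).1
        omega
      · obtain ⟨e, he⟩ := card_pos.mp (by omega : 0 < (C \ WW k).card)
        refine ⟨e, he, not_isEadd_card hk ?_⟩
        rw [insert_inter_of_notMem (mem_sdiff.mp he).2]
        omega
    obtain ⟨e, heCW, hnE⟩ := hgood
    obtain ⟨heC, heW⟩ := mem_sdiff.mp heCW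
    refine ⟨e, heC, not_inG_B ?_ hnE ?_⟩
    · rw [insert_inter_of_notMem heW]; omega
    · exact ne_OO_of_outside (mem_insert_self _ _) heW
  · -- pick e in W
    have hpool : 2 ≤ (C ∩ WW k).card := by omega
    have hgood : ∃ e ∈ C ∩ WW k, ¬ isEadd k (insert e N) := by
      by_cases hq : (N ∩ WW k).card = k - 3
      · exact pick_nonEadd hk (by omega) fun x hx => hCN x (mem_inter.mp hx).1
      · obtain ⟨e, he⟩ := card_pos.mp (by omega : 0 < (C ∩ WW k).card)
        refine ⟨e, he, not_isEadd_card hk ?_⟩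
        rw [insert_inter_of_mem (mem_inter.mp he).2,
          card_insert_of_notMem (fun hc => hCN e (mem_inter.mp he).1 (mem_inter.mp hc).1)]
        omega
    obtain ⟨e, heCW, hnE⟩ := hgood
    obtain ⟨heC, heW⟩ := mem_inter.mp heCW
    refine ⟨e, heC, not_inG_B ?_ hnE ?_⟩
    · rw [insert_inter_of_mem heW,
        card_insert_of_notMem (fun hc => hCN e heC (mem_inter.mp hc).1)]
      omega
    · intro hO
      have hNsub : N ⊆ OO k := by
        rw [← hO]; exact subset_insert _ _
      have : N ∩ WW k = N := inter_eq_left.mpr (hNsub.trans OO_subset_WW)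
      rw [this, hNc] at hpar
      omega

lemma P1 (hk : 4 ≤ k) (hek : k % 2 = 0) {C : Finset ℕ} (hC : C ⊆ UU k)
    (hCc : C.card = k + 1) : ∃ A ∈ Fam k, A ⊆ C := by
  by_cases h1C : 1 ∈ C
  · have hC'V : C.erase 1 ⊆ VV k := by
      intro x hx
      obtain ⟨hx1, hxC⟩ := mem_erase.mp hx
      have hb := mem_Icc.mp (hC hxC)
      simp only [VV, mem_Icc]; omega
    have hC'c : (C.erase 1).card = k := by rw [card_erase_of_mem h1C, hCc]; omega
    obtain ⟨e, heC', hG⟩ := P1coreA hk hek hC'V hC'c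
    have h1ne : 1 ∉ (C.erase 1).erase e :=
      fun hc => (mem_erase.mp (mem_of_mem_erase hc)).1 rfl
    refine ⟨insert 1 ((C.erase 1).erase e), mem_Fam.mpr ⟨?_, ?_, ?_⟩, ?_⟩
    · intro x hx
      rcases mem_insert.mp hx with h | h
      · subst h; exact one_mem_UU hk
      · exact hC (mem_of_mem_erase (mem_of_mem_erase h))
    · rw [card_insert_of_notMem h1ne, card_erase_of_mem heC', hC'c]; omega
    · rw [mem', if_pos (mem_insert_self _ _), erase_insert h1ne]; exact hG
    · intro x hx
      rcases mem_insert.mp hx with h | h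
      · subst h; exact h1C
      · exact mem_of_mem_erase (mem_of_mem_erase h)
  · have hCV : C ⊆ VV k := by
      intro x hx
      have hb := mem_Icc.mp (hC hx)
      have hx1 : x ≠ 1 := fun hc => h1C (hc ▸ hx)
      simp only [VV, mem_Icc]; omega
    obtain ⟨e, heC, hnG⟩ := P1coreB hk hek hCV hCc
    refine ⟨C.erase e, mem_Fam.mpr ⟨?_, ?_, ?_⟩, erase_subset _ _⟩
    · exact (erase_subset _ _).trans hC
    · rw [card_erase_of_mem heC, hCc]; omega
    · have h1ne : 1 ∉ C.erase e := fun hc => h1C (mem_of_mem_erase hc)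
      rw [mem', if_neg h1ne, sdiff_erase (hCV heC)]
      exact hnG

/-- Kneser-type connectivity / closure lemma -/
lemma closure_all {C : Finset ℕ} {m j : ℕ} (hj : 1 ≤ j) (hC : C.card = 2*m + j)
    (H : Finset ℕ → Prop)
    (hne : ∃ S, S ⊆ C ∧ S.card = m ∧ H S)
    (hcl : ∀ S, S ⊆ C → S.card = m → H S → ∀ S', S' ⊆ C \ S → S'.card = m → H S') :
    ∀ S', S' ⊆ C → S'.card = m → H S' := by
  obtain ⟨S₀, hS₀C, hS₀c, hHS₀⟩ := hne
  suffices key : ∀ t S, S ⊆ C → S.card = m → H S →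
      ∀ S', S' ⊆ C → S'.card = m → (S ∩ S').card ≤ t → H S' by
    intro S' hS' hS'c
    refine key m S₀ hS₀C hS₀c hHS₀ S' hS' hS'c ?_
    calc (S₀ ∩ S').card ≤ S₀.card := card_le_card inter_subset_left
    _ = m := hS₀c
  intro t
  induction t with
  | zero =>
    intro S hS hSc hHS S' hS' hS'c hint
    refine hcl S hS hSc hHS S' ?_ hS'c
    intro x hx
    refine mem_sdiff.mpr ⟨hS' hx, fun hxS => ?_⟩
    have hmem : x ∈ S ∩ S' := mem_inter.mpr ⟨hxS, hx⟩
    have h0 : (S ∩ S').card = 0 := le_antisymm hint (Nat.zero_le _)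
    rw [card_eq_zero] at h0; rw [h0] at hmem; exact notMem_empty x hmem
  | succ t ih =>
    intro S hS hSc hHS S' hS' hS'c hint
    by_cases hle : (S ∩ S').card ≤ t
    · exact ih S hS hSc hHS S' hS' hS'c hle
    have hteq : (S ∩ S').card = t + 1 := by omega
    have ht1m : t + 1 ≤ m := by
      rw [← hteq, ← hSc]; exact card_le_card inter_subset_left
    have hSS' : (S ∪ S').card = 2*m - (t+1) := by
      have h := card_union_add_card_inter S S'
      rw [hteq, hSc, hS'c] at h; omega
    have havail : (C \ (S ∪ S')).card = j + (t+1) := by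
      rw [card_sdiff_of_subset (union_subset hS hS'), hC, hSS']; omega
    obtain ⟨T₀, hT₀sub, hT₀c⟩ :=
      Finset.exists_subset_card_eq (s := C \ (S ∪ S')) (n := t+1) (by omega)
    set T : Finset ℕ := (S' \ S) ∪ T₀ with hT
    have hS'S : (S' \ S).card = m - (t+1) := by
      have h := card_sdiff_add_card_inter S' S
      rw [inter_comm, hteq, hS'c] at h; omega
    have hdisj : Disjoint (S' \ S) T₀ := by
      refine disjoint_left.mpr fun x hx hx0 => ?_
      have h := hT₀sub hx0; rw [mem_sdiff] at h
      exact h.2 (mem_union.mpr (Or.inr (mem_sdiff.mp hx).1))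
    have hTc : T.card = m := by
      rw [hT, card_union_of_disjoint hdisj, hS'S, hT₀c]; omega
    have hTCS : T ⊆ C \ S := by
      intro x hx; rcases mem_union.mp hx with h | h
      · exact mem_sdiff.mpr ⟨hS' (mem_sdiff.mp h).1, (mem_sdiff.mp h).2⟩
      · have h2 := hT₀sub h; rw [mem_sdiff] at h2 ⊢
        exact ⟨h2.1, fun hxS => h2.2 (mem_union.mpr (Or.inl hxS))⟩
    have hHT : H T := hcl S hS hSc hHS T hTCS hTc
    have hTC : T ⊆ C := hTCS.trans sdiff_subset
    have hTS' : T ∩ S' = S' \ S := by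
      rw [hT, union_inter_distrib_right]
      have h1 : (S' \ S) ∩ S' = S' \ S := inter_eq_left.mpr sdiff_subset
      have h2 : T₀ ∩ S' = ∅ := by
        rw [← disjoint_iff_inter_eq_empty]
        refine disjoint_left.mpr fun x hx0 hx' => ?_
        have h := hT₀sub hx0; rw [mem_sdiff] at h
        exact h.2 (mem_union.mpr (Or.inr hx'))
      rw [h1, h2, union_empty]
    have hTS'u : (T ∪ S').card = m + (t+1) := by
      have h := card_union_add_card_inter T S'
      rw [hTS', hS'S, hTc, hS'c] at h; omega
    have havail2 : (C \ (T ∪ S')).card = m + j - (t+1) := by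
      rw [card_sdiff_of_subset (union_subset hTC hS'), hC, hTS'u]; omega
    by_cases hcase : t + 1 ≤ j
    · obtain ⟨T', hT'sub, hT'c⟩ :=
        Finset.exists_subset_card_eq (s := C \ (T ∪ S')) (n := m) (by omega)
      have hHT' : H T' := by
        refine hcl T hTC hTc hHT T' (hT'sub.trans ?_) hT'c
        exact sdiff_subset_sdiff (Subset.refl _) subset_union_left
      refine hcl T' (hT'sub.trans sdiff_subset) hT'c hHT' S' ?_ hS'c
      intro x hx
      refine mem_sdiff.mpr ⟨hS' hx, fun hxT' => ?_⟩
      have h := hT'sub hxT'; rw [mem_sdiff] at h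
      exact h.2 (mem_union.mpr (Or.inr hx))
    · have hS'T : (S' \ T).card = t + 1 := by
        have h := card_sdiff_add_card_inter S' T
        rw [inter_comm, hTS', hS'S, hS'c] at h; omega
      obtain ⟨P, hPsub, hPc⟩ :=
        Finset.exists_subset_card_eq (s := S' \ T) (n := t+1-j) (by omega)
      set T₂ : Finset ℕ := (C \ (T ∪ S')) ∪ P with hT₂
      have hdisj2 : Disjoint (C \ (T ∪ S')) P := by
        refine disjoint_left.mpr fun x hx hxP => ?_
        have h := hPsub hxP; rw [mem_sdiff] at h
        have h2 := mem_sdiff.mp hx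
        exact h2.2 (mem_union.mpr (Or.inr h.1))
      have hT₂c : T₂.card = m := by
        rw [hT₂, card_union_of_disjoint hdisj2, havail2, hPc]; omega
      have hT₂CT : T₂ ⊆ C \ T := by
        intro x hx; rcases mem_union.mp hx with h | h
        · exact sdiff_subset_sdiff (Subset.refl _) subset_union_left h
        · have h2 := hPsub h; rw [mem_sdiff] at h2
          exact mem_sdiff.mpr ⟨hS' h2.1, h2.2⟩
      have hHT₂ : H T₂ := hcl T hTC hTc hHT T₂ hT₂CT hT₂c
      have hT₂S' : T₂ ∩ S' = P := by
        rw [hT₂, union_inter_distrib_right]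
        have h1 : (C \ (T ∪ S')) ∩ S' = ∅ := by
          rw [← disjoint_iff_inter_eq_empty]
          refine disjoint_left.mpr fun x hx hx' => ?_
          exact (mem_sdiff.mp hx).2 (mem_union.mpr (Or.inr hx'))
        have h2 : P ∩ S' = P := inter_eq_left.mpr (hPsub.trans sdiff_subset)
        rw [h1, h2, empty_union]
      refine ih T₂ (hT₂CT.trans sdiff_subset) hT₂c hHT₂ S' hS' hS'c ?_
      rw [hT₂S', hPc]; omega

lemma union_sdiff_eq_self {X S B : Finset ℕ} (hSB : S ⊆ B)
    (hdisj : ∀ x ∈ B, x ∉ X) : (X ∪ S) \ B = X := by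
  ext x
  rw [mem_sdiff, mem_union]
  constructor
  · rintro ⟨h1 | h1, h2⟩
    · exact h1
    · exact absurd (hSB h1) h2
  · intro hx
    exact ⟨Or.inl hx, fun hB => hdisj x hB hx⟩

end Stmt2Aux

/-- For every even `k ≥ 4`, there is an intersecting family `F` of `k`-subsets of
`[2k]` such that `D(F)` is exactly the family of all subsets of `[2k]` of size at
most `k-1`. -/
theorem stmt_2 (k : ℕ) (hk : 4 ≤ k) (heven : Even k) :
    ∃ F : Finset (Finset ℕ),
      (∀ A ∈ F, A ⊆ Finset.Icc 1 (2 * k) ∧ A.card = k) ∧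
      (∀ A ∈ F, ∀ B ∈ F, (A ∩ B).Nonempty) ∧
      (∀ X : Finset ℕ,
        (∃ A ∈ F, ∃ B ∈ F, X = A \ B) ↔
          (X ⊆ Finset.Icc 1 (2 * k) ∧ X.card ≤ k - 1)) := by
  open Stmt2Aux Finset in
  have hek : k % 2 = 0 := Nat.even_iff.mp heven
  have hIccU : Finset.Icc 1 (2 * k) = UU k := rfl
  refine ⟨Fam k, ?_, ?_, ?_⟩
  · intro A hA
    obtain ⟨h1, h2, -⟩ := mem_Fam.mp hA
    exact ⟨h1, h2⟩
  · intro A hA B hB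
    exact intersecting hk hA hB
  · intro X
    constructor
    · rintro ⟨A, hA, B, hB, rfl⟩
      obtain ⟨hAU, hAc, -⟩ := mem_Fam.mp hA
      refine ⟨sdiff_subset.trans hAU, ?_⟩
      have hint := intersecting hk hA hB
      have h1 := card_sdiff_add_card_inter A B
      have h2 : 1 ≤ (A ∩ B).card := card_pos.mpr hint
      omega
    · rintro ⟨hXU, hXc⟩
      rw [hIccU] at hXU
      by_cases hX0 : X.card = 0
      · rw [card_eq_zero] at hX0
        subst hX0
        obtain ⟨A, hA, -⟩ := P2 hk hek (empty_subset (UU k)) (by omega)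
        exact ⟨A, hA, A, hA, by simp⟩
      · by_contra hP
        push_neg at hP
        set C : Finset ℕ := UU k \ X with hCdef
        have hXle : X.card ≤ k - 1 := hXc
        have hCc : C.card = 2*(k - X.card) + X.card := by
          rw [hCdef, card_sdiff_of_subset hXU, card_UU]; omega
        have hCX : ∀ x ∈ C, x ∉ X := fun x hx => (mem_sdiff.mp hx).2
        have hCU : C ⊆ UU k := sdiff_subset
        have hkey : ∀ S', S' ⊆ C → S'.card = k - X.card → (X ∪ S') ∈ Fam k := by
          refine closure_all (by omega) hCc (fun S => (X ∪ S) ∈ Fam k) ?_ ?_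
          · -- nonempty via P2
            obtain ⟨A, hA, hXA⟩ := P2 hk hek hXU hXle
            obtain ⟨hAU, hAc, -⟩ := mem_Fam.mp hA
            refine ⟨A \ X, ?_, ?_, ?_⟩
            · exact sdiff_subset_sdiff hAU (Subset.refl _)
            · rw [card_sdiff_of_subset hXA, hAc]
            · show X ∪ (A \ X) ∈ Fam k
              rw [union_sdiff_of_subset hXA]; exact hA
          · -- closure step
            intro S hS hSc hHS S' hS'sub hS'c
            set T : Finset ℕ := (C \ S) \ S' with hTdef
            have hTc : T.card = X.card := by
              rw [hTdef, card_sdiff_of_subset hS'sub, card_sdiff_of_subset hS, hCc, hSc, hS'c]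
              omega
            set B : Finset ℕ := S ∪ T with hBdef
            have hTsubCS : T ⊆ C \ S := sdiff_subset
            have hBC : B ⊆ C := by
              rw [hBdef]
              exact union_subset hS (hTsubCS.trans sdiff_subset)
            have hBc : B.card = k := by
              rw [hBdef, card_union_of_disjoint, hSc, hTc]
              · omega
              · exact disjoint_left.mpr fun x hx hxT => (mem_sdiff.mp (hTsubCS hxT)).2 hx
            by_cases hBF : B ∈ Fam k
            · exfalso
              refine hP (X ∪ S) hHS B hBF ?_
              rw [union_sdiff_eq_self (hBdef ▸ subset_union_left)
                (fun x hx => hCX x (hBC hx))]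
            · have hBc' := compl_mem_Fam hk (hBC.trans hCU) hBc hBF
              have hUB : UU k \ B = X ∪ S' := by
                have hU : UU k = X ∪ C := (union_sdiff_of_subset hXU).symm
                rw [hU, union_sdiff_distrib]
                have h1 : X \ B = X :=
                  sdiff_eq_self_of_disjoint
                    (disjoint_left.mpr fun x hx hxB => hCX x (hBC hxB) hx)
                have h2 : C \ B = S' := by
                  have hstep : C \ B = (C \ S) \ T := by
                    rw [hBdef]; ext x
                    simp only [mem_sdiff, mem_union]
                    tauto
                  rw [hstep, hTdef, sdiff_sdiff_self_left]
                  exact inter_eq_right.mpr hS'sub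
                rw [h1, h2]
              rw [hUB] at hBc'
              exact hBc'
        have hCk : k + 1 ≤ C.card := by omega
        obtain ⟨C'', hC''sub, hC''c⟩ := Finset.exists_subset_card_eq hCk
        obtain ⟨B, hBF, hBsub⟩ := P1 hk hek (hC''sub.trans hCU) hC''c
        obtain ⟨hBU, hBc, -⟩ := mem_Fam.mp hBF
        obtain ⟨S₀, hS₀sub, hS₀c⟩ :=
          Finset.exists_subset_card_eq (show k - X.card ≤ B.card by omega)
        have hH := hkey S₀ (hS₀sub.trans (hBsub.trans hC''sub)) hS₀c
        refine hP (X ∪ S₀) hH B hBF ?_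
        rw [union_sdiff_eq_self hS₀sub
          (fun x hx => hCX x (hC''sub (hBsub hx)))]
end

section
/- Suppose F ⊆ binom([n], k) is intersecting and every (k-1)-subset X of [n] arises exactly once as F \ F' with F, F' ∈ F. Then for every (k-1)-subset X, there is exactly one member of F contained in [n] \ X; consequently |F₁ ∩ F₂| ≤ k-2 for all distinct F₁, F₂ ∈ F. -/
/-- If `F` is an intersecting family of `k`-subsets of `[n]` and every
`(k-1)`-subset of `[n]` arises exactly once as a difference of members of `F`,
then every `(k-1)`-subset `X` has exactly one member of `F` inside `[n] \ X`,
and any two distinct members of `F` meet in at most `k-2` elements. -/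
theorem stmt_7 (n k : ℕ) (F : Finset (Finset ℕ))
    (hF : ∀ A ∈ F, A ⊆ Finset.Icc 1 n ∧ A.card = k)
    (hint : ∀ A ∈ F, ∀ B ∈ F, (A ∩ B).Nonempty)
    (hD : ∀ X ⊆ Finset.Icc 1 n, X.card = k - 1 →
      ∃! p : Finset ℕ × Finset ℕ, p.1 ∈ F ∧ p.2 ∈ F ∧ X = p.1 \ p.2) :
    (∀ X ⊆ Finset.Icc 1 n, X.card = k - 1 →
      ∃! A, A ∈ F ∧ A ⊆ Finset.Icc 1 n \ X) ∧
    (∀ F₁ ∈ F, ∀ F₂ ∈ F, F₁ ≠ F₂ → (F₁ ∩ F₂).card ≤ k - 2) := by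
  -- First, k ≥ 1.
  have hk : 1 ≤ k := by
    by_contra h
    push_neg at h
    interval_cases k
    obtain ⟨⟨A, B⟩, ⟨hA, hB, hAB⟩, _⟩ := hD ∅ (Finset.empty_subset _) rfl
    have hA0 : A = ∅ := Finset.card_eq_zero.mp (hF A hA).2
    have := hint A hA A hA
    simp [hA0] at this
  -- Key computation: if X ⊆ G, X disjoint from A, both in F, |X| = k-1, then X = G \ A.
  have sdiff_eq : ∀ X : Finset ℕ, X.card = k - 1 → ∀ G ∈ F, ∀ A ∈ F,
      X ⊆ G → Disjoint X A → X = G \ A := by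
    intro X hXc G hG A hA hXG hdisj
    have hXsub : X ⊆ G \ A := Finset.subset_sdiff.mpr ⟨hXG, hdisj⟩
    have hne := hint G hG A hA
    have h1 : 1 ≤ (G ∩ A).card := Finset.card_pos.mpr hne
    have h2 : (G \ A).card + (G ∩ A).card = G.card := Finset.card_sdiff_add_card_inter G A
    have hGc : G.card = k := (hF G hG).2
    have hcard : (G \ A).card ≤ X.card := by omega
    exact Finset.eq_of_subset_of_card_le hXsub hcard
  -- Part 1.
  have key : ∀ X ⊆ Finset.Icc 1 n, X.card = k - 1 →
      ∃! A, A ∈ F ∧ A ⊆ Finset.Icc 1 n \ X := by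
    intro X hX hXc
    obtain ⟨⟨F1, F2⟩, ⟨h1, h2, hX12⟩, huniq⟩ := hD X hX hXc
    refine ⟨F2, ⟨h2, ?_⟩, ?_⟩
    · intro x hx
      rw [Finset.mem_sdiff]
      refine ⟨(hF F2 h2).1 hx, fun hxX => ?_⟩
      rw [hX12] at hxX
      exact (Finset.mem_sdiff.mp hxX).2 hx
    · rintro A ⟨hA, hAsub⟩
      have hdisj : Disjoint X A := by
        rw [Finset.disjoint_right]
        intro a ha haX
        exact (Finset.mem_sdiff.mp (hAsub ha)).2 haX
      have hXF1 : X ⊆ F1 := by rw [hX12]; exact Finset.sdiff_subset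
      have := huniq (F1, A) ⟨h1, hA, sdiff_eq X hXc F1 h1 A hA hXF1 hdisj⟩
      exact congrArg Prod.snd this
  refine ⟨key, ?_⟩
  -- Part 2.
  intro F₁ h1 F₂ h2 hne
  by_contra hbig
  push_neg at hbig
  have hc1 : F₁.card = k := (hF F₁ h1).2
  have hc2 : F₂.card = k := (hF F₂ h2).2
  have hle : (F₁ ∩ F₂).card ≤ k := by
    calc (F₁ ∩ F₂).card ≤ F₁.card := Finset.card_le_card Finset.inter_subset_left
    _ = k := hc1
  have hneq : (F₁ ∩ F₂).card ≠ k := by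
    intro hEq
    have hsub : F₁ ⊆ F₂ := by
      have : F₁ ∩ F₂ = F₁ :=
        Finset.eq_of_subset_of_card_le Finset.inter_subset_left (by omega)
      rw [← this]; exact Finset.inter_subset_right
    exact hne (Finset.eq_of_subset_of_card_le hsub (by omega))
  have hXc : (F₁ ∩ F₂).card = k - 1 := by omega
  set X := F₁ ∩ F₂ with hXdef
  have hXIcc : X ⊆ Finset.Icc 1 n :=
    (Finset.inter_subset_left).trans (hF F₁ h1).1
  obtain ⟨A, ⟨hA, hAsub⟩, _⟩ := key X hXIcc hXc
  have hdisj : Disjoint X A := by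
    rw [Finset.disjoint_right]
    intro a ha haX
    exact (Finset.mem_sdiff.mp (hAsub ha)).2 haX
  obtain ⟨p, _, huniq⟩ := hD X hXIcc hXc
  have e1 := huniq (F₁, A) ⟨h1, hA,
    sdiff_eq X hXc F₁ h1 A hA Finset.inter_subset_left hdisj⟩
  have e2 := huniq (F₂, A) ⟨h2, hA,
    sdiff_eq X hXc F₂ h2 A hA Finset.inter_subset_right hdisj⟩
  have : F₁ = F₂ := congrArg Prod.fst (e1.trans e2.symm)
  exact hne this
end

section
/- Let N = {0,1,…,2k-1} and partition N into residue classes A, B, C modulo 3. Let X be a (k-1)-subset of N containing none of A, B, C entirely, and suppose the sum of all elements of N is congruent to j mod 3. Then for i = 2 - j (mod 3) and i = 4 - j (mod 3), X is a difference of two members of R_i, where R_i is the family of k-subsets of N whose element sum is ≡ i (mod 3). -/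
private lemma stmt_11_aux (j σ : ZMod 3) : (2 - j) - σ ≠ j - σ - (2 - j) ∧
    (4 - j) - σ ≠ j - σ - (4 - j) := by revert j σ; decide

/-- Let `N = {0,…,2k-1}` with residue classes `A`, `B`, `C` mod 3, and suppose
`∑ N ≡ j (mod 3)`. If `X` is a `(k-1)`-subset of `N` containing none of `A`,
`B`, `C` entirely, then for `i = 2 - j` and `i = 4 - j` (mod 3), `X` is a
difference of two members of `R_i`, the family of `k`-subsets of `N` with
element sum `≡ i (mod 3)`. -/
theorem stmt_11 (k : ℕ) (j : ZMod 3)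
    (hsum : ∑ x ∈ Finset.range (2 * k), (x : ZMod 3) = j)
    (X : Finset ℕ) (hX : X ⊆ Finset.range (2 * k)) (hXcard : X.card = k - 1)
    (hA : ¬ (Finset.range (2 * k)).filter (fun x => x % 3 = 0) ⊆ X)
    (hB : ¬ (Finset.range (2 * k)).filter (fun x => x % 3 = 1) ⊆ X)
    (hC : ¬ (Finset.range (2 * k)).filter (fun x => x % 3 = 2) ⊆ X) :
    ∀ i : ZMod 3, i = 2 - j ∨ i = 4 - j →
      ∃ S T : Finset ℕ,
        (S ⊆ Finset.range (2 * k) ∧ S.card = k ∧ ∑ x ∈ S, (x : ZMod 3) = i) ∧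
        (T ⊆ Finset.range (2 * k) ∧ T.card = k ∧ ∑ x ∈ T, (x : ZMod 3) = i) ∧
        X = S \ T := by
  intro i hi
  -- k ≥ 1
  have hk : 1 ≤ k := by
    by_contra h
    apply hA
    interval_cases k
    simp
  -- every residue class has an element outside X
  have hres : ∀ r : ZMod 3, ∃ a, a ∈ Finset.range (2 * k) ∧ a ∉ X ∧ (a : ZMod 3) = r := by
    intro r
    have cast3 : ∀ a : ℕ, (a : ZMod 3) = ((a % 3 : ℕ) : ZMod 3) := fun a => (ZMod.natCast_mod a 3).symm
    fin_cases r
    · obtain ⟨a, ha, haX⟩ := Finset.not_subset.mp hA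
      simp only [Finset.mem_filter] at ha
      exact ⟨a, ha.1, haX, by rw [cast3, ha.2]; rfl⟩
    · obtain ⟨a, ha, haX⟩ := Finset.not_subset.mp hB
      simp only [Finset.mem_filter] at ha
      exact ⟨a, ha.1, haX, by rw [cast3, ha.2]; rfl⟩
    · obtain ⟨a, ha, haX⟩ := Finset.not_subset.mp hC
      simp only [Finset.mem_filter] at ha
      exact ⟨a, ha.1, haX, by rw [cast3, ha.2]; rfl⟩
  set σ : ZMod 3 := ∑ x ∈ X, (x : ZMod 3) with hσ
  obtain ⟨a, haN, haX, har⟩ := hres (i - σ)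
  obtain ⟨b, hbN, hbX, hbs⟩ := hres (j - σ - i)
  have hrs : i - σ ≠ j - σ - i := by
    rcases hi with rfl | rfl
    · exact (stmt_11_aux j σ).1
    · exact (stmt_11_aux j σ).2
  have hab : a ≠ b := fun h => hrs (by rw [← har, ← hbs, h])
  set Y : Finset ℕ := Finset.range (2 * k) \ X with hY
  have hYcard : Y.card = k + 1 := by
    rw [hY, Finset.card_sdiff_of_subset hX, Finset.card_range, hXcard]; omega
  have hYsum : ∑ x ∈ Y, (x : ZMod 3) = j - σ := by
    have := Finset.sum_sdiff (f := fun x : ℕ => ((x : ZMod 3))) (h := hX)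
    rw [hsum] at this
    rw [hY, ← hσ] at *
    linear_combination this
  have haY : a ∈ Y := Finset.mem_sdiff.mpr ⟨haN, haX⟩
  have hbY : b ∈ Y := Finset.mem_sdiff.mpr ⟨hbN, hbX⟩
  refine ⟨insert a X, Y.erase b, ⟨?_, ?_, ?_⟩, ⟨?_, ?_, ?_⟩, ?_⟩
  · exact Finset.insert_subset haN hX
  · rw [Finset.card_insert_of_notMem haX, hXcard]; omega
  · rw [Finset.sum_insert haX, har, ← hσ]; ring
  · exact (Finset.erase_subset b Y).trans (Finset.sdiff_subset)
  · rw [Finset.card_erase_of_mem hbY, hYcard]; omega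
  · rw [Finset.sum_erase_eq_sub hbY, hYsum, hbs]; ring
  · ext x
    simp only [Finset.mem_sdiff, Finset.mem_insert, Finset.mem_erase]
    constructor
    · intro hx
      refine ⟨Or.inr hx, ?_⟩
      rintro ⟨-, hxY⟩
      exact (Finset.mem_sdiff.mp hxY).2 hx
    · rintro ⟨h1 | h1, h2⟩
      · subst h1; exact absurd ⟨hab, haY⟩ h2
      · exact h1
end

section
/- Let k ≡ 1 (mod 3), N = {0,1,…,2k-1}, and R_0 the family of k-subsets of N with element sum ≡ 0 (mod 3). Then R_0 is intersecting, and R_0 and R_2 (sum ≡ 2 mod 3) are cross-intersecting. -/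
lemma aux_sum13 (k : ℕ) (hk : k % 3 = 1) (A B : Finset ℕ)
    (hA : A ⊆ Finset.range (2 * k)) (hB : B ⊆ Finset.range (2 * k))
    (hcA : A.card = k) (hcB : B.card = k) (hd : Disjoint A B) :
    (∑ x ∈ A, (x : ZMod 3)) + (∑ x ∈ B, (x : ZMod 3)) = 1 := by
  have hun : A ∪ B = Finset.range (2 * k) := by
    apply Finset.eq_of_subset_of_card_le (Finset.union_subset hA hB)
    rw [Finset.card_union_of_disjoint hd, hcA, hcB, Finset.card_range]; omega
  have hsum : (∑ x ∈ A, (x : ZMod 3)) + (∑ x ∈ B, (x : ZMod 3))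
      = ∑ x ∈ Finset.range (2 * k), (x : ZMod 3) := by
    rw [← hun, Finset.sum_union hd]
  rw [hsum, ← Nat.cast_sum]
  have h2 : (∑ x ∈ Finset.range (2 * k), x) = k * (2 * k - 1) := by
    have h := Finset.sum_range_id_mul_two (2 * k)
    rw [mul_assoc] at h
    omega
  rw [h2]
  have h3 : k * (2 * k - 1) % 3 = 1 := by
    obtain ⟨m, rfl⟩ : ∃ m, k = 3 * m + 1 := ⟨k / 3, by omega⟩
    ring_nf
    omega
  rw [← ZMod.natCast_mod (k * (2 * k - 1)) 3, h3]
  norm_num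

/-- For `k ≡ 1 (mod 3)` and `N = {0,…,2k-1}`, the family `R₀` of `k`-subsets of
`N` with element sum `≡ 0 (mod 3)` is intersecting, and `R₀` and `R₂` are
cross-intersecting. -/
theorem stmt_13 (k : ℕ) (hk : k % 3 = 1) (R₀ R₂ : Finset (Finset ℕ))
    (hR₀ : R₀ = ((Finset.range (2 * k)).powersetCard k).filter
      (fun S : Finset ℕ => (∑ x ∈ S, (x : ZMod 3)) = 0))
    (hR₂ : R₂ = ((Finset.range (2 * k)).powersetCard k).filter
      (fun S : Finset ℕ => (∑ x ∈ S, (x : ZMod 3)) = 2)) :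
    (∀ A ∈ R₀, ∀ B ∈ R₀, (A ∩ B).Nonempty) ∧
    (∀ A ∈ R₀, ∀ B ∈ R₂, (A ∩ B).Nonempty) := by
  subst hR₀ hR₂
  constructor <;>
  · intro A hA B hB
    simp only [Finset.mem_filter, Finset.mem_powersetCard] at hA hB
    obtain ⟨⟨hAs, hAc⟩, hA0⟩ := hA
    obtain ⟨⟨hBs, hBc⟩, hB0⟩ := hB
    rw [Finset.nonempty_iff_ne_empty]
    intro hemp
    have hd : Disjoint A B := Finset.disjoint_iff_inter_eq_empty.mpr hemp
    have := aux_sum13 k hk A B hAs hBs hAc hBc hd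
    rw [hA0, hB0] at this
    revert this; decide
end

section
/- For any n and k, if F ⊆ binom([n], k) is an intersecting family with every (k-1)-subset of [n] in D(F), and [k] ∈ F, then for every (k-1)-subset X' of [n] \ [2k-1] with n ≥ 3k-1 there is F₃ ∈ F with F₃ = X' ∪ {1}; i.e., the members of F lying inside {1} ∪ [2k, n] form a full star centered at 1. (This is the key step in proving n ≤ 3k-2.) -/
/-!
The sets `X ⊆ [k+1, n]` of size `k - 1` are the vertices of a Kneser graph on `n - k ≥ 2k - 1`
points, which is connected. Each such `X` lies in `D(F)`, hence extends by one point `x ∈ [k]`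
(forced by `[k] ∈ F`) to a member of `F`, and if `insert x W ∈ F` and `Z` is disjoint from `W`,
then `Z` can only extend by the same `x`, since its extension must meet `insert x W`. So a single
`x` serves every `X`, in particular one avoiding the set `B` that realizes `[2, k] = A \ B`. As `F`
is intersecting, `x ∈ B`, so `x ∉ [2, k]`, i.e. `x = 1`.
-/

open Finset

section Kneser

variable {α : Type*} [DecidableEq α] {S : Finset α} {r : ℕ} {P : Finset α → Prop}

lemma card_insert_erase_of_mem_of_notMem {W : Finset α} {w w' : α} (hw : w ∈ W)
    (hw' : w' ∉ W) : #(insert w' (W.erase w)) = #W := by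
  rw [card_insert_of_notMem fun h ↦ hw' (mem_of_mem_erase h), card_erase_add_one hw]

/-- Exchanging one element is a walk of length two in the Kneser graph, through any `r`-set
avoiding `insert w' W`; such a set exists because `#S ≥ 2r + 1`. -/
lemma kneser_exchange (hS : 2 * r < #S)
    (hP : ∀ W ⊆ S, ∀ Z ⊆ S, #W = r → #Z = r → Disjoint W Z → P W → P Z)
    {W : Finset α} (hW : W ⊆ S) (hWc : #W = r) {w w' : α} (hw : w ∈ W) (hw'S : w' ∈ S)
    (hw'W : w' ∉ W) (hPW : P W) : P (insert w' (W.erase w)) := by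
  have hcard : r ≤ #(S \ insert w' W) := by
    have := le_card_sdiff (insert w' W) S
    rw [card_insert_of_notMem hw'W] at this
    omega
  obtain ⟨Z, hZ, hZc⟩ := exists_subset_card_eq hcard
  have hZS : Z ⊆ S := hZ.trans sdiff_subset
  have hZW : Disjoint Z (insert w' W) := disjoint_of_subset_left hZ sdiff_disjoint
  have hPZ : P Z :=
    hP W hW Z hZS hWc hZc (disjoint_of_subset_right (subset_insert _ _) hZW).symm hPW
  refine hP Z hZS _ ?_ hZc ?_ ?_ hPZ
  · exact insert_subset hw'S ((erase_subset _ _).trans hW)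
  · rw [card_insert_erase_of_mem_of_notMem hw hw'W, hWc]
  · exact disjoint_of_subset_right (insert_subset_insert _ (erase_subset _ _)) hZW

/-- The Kneser graph on the `r`-subsets of `S` is connected when `#S ≥ 2r + 1`: a predicate
that is inherited along disjoint pairs holds everywhere once it holds somewhere. -/
lemma kneser_induction (hS : 2 * r < #S)
    (hP : ∀ W ⊆ S, ∀ Z ⊆ S, #W = r → #Z = r → Disjoint W Z → P W → P Z)
    {W W' : Finset α} (hW : W ⊆ S) (hWc : #W = r) (hW' : W' ⊆ S) (hW'c : #W' = r)
    (hPW : P W) : P W' := by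
  suffices ∀ m, ∀ W ⊆ S, #W = r → #(W \ W') = m → P W → P W' from
    this _ W hW hWc rfl hPW
  intro m
  induction m with
  | zero =>
    intro W _ hWc hm hPW
    have hsub : W ⊆ W' := sdiff_eq_empty_iff_subset.mp (card_eq_zero.mp hm)
    rwa [← eq_of_subset_of_card_le hsub (by omega)]
  | succ m ih =>
    intro W hW hWc hm hPW
    obtain ⟨w, hw⟩ : (W \ W').Nonempty := card_pos.mp (by omega)
    obtain ⟨w', hw'⟩ : (W' \ W).Nonempty :=
      card_pos.mp (by rw [← card_sdiff_comm (by omega)]; omega)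
    rw [mem_sdiff] at hw hw'
    refine ih _ (insert_subset (hW' hw'.1) ((erase_subset _ _).trans hW)) ?_ ?_
      (kneser_exchange hS hP hW hWc hw.1 (hW' hw'.1) hw'.2 hPW)
    · rw [card_insert_erase_of_mem_of_notMem hw.1 hw'.2, hWc]
    · rw [insert_sdiff_of_mem _ hw'.1, erase_sdiff_comm, card_erase_of_mem (mem_sdiff.mpr hw),
        hm, Nat.add_sub_cancel]

end Kneser

lemma mem_of_insert_mem_of_disjoint {α : Type*} [DecidableEq α] {F : Finset (Finset α)}
    (hint : ∀ A ∈ F, ∀ B ∈ F, (A ∩ B).Nonempty) {T X : Finset α} {c : α} (hT : T ∈ F)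
    (hcX : insert c X ∈ F) (hXT : Disjoint X T) : c ∈ T := by
  obtain ⟨e, he⟩ := hint _ hcX _ hT
  rw [mem_inter, mem_insert] at he
  obtain ⟨rfl | heX, heT⟩ := he
  · exact heT
  · exact absurd heT (disjoint_left.mp hXT heX)

section Family

variable {n k : ℕ} {F : Finset (Finset ℕ)}

lemma disjoint_Icc_one_of_subset_Icc_succ {X : Finset ℕ} (hX : X ⊆ Icc (k + 1) n) :
    Disjoint X (Icc 1 k) :=
  disjoint_left.mpr fun a ha ha' ↦ by
    have := mem_Icc.mp (hX ha)
    have := mem_Icc.mp ha'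
    omega

lemma exists_insert_mem_of_subset_Icc_succ (hk0 : 0 < k) (hF : ∀ A ∈ F, #A = k)
    (hint : ∀ A ∈ F, ∀ B ∈ F, (A ∩ B).Nonempty)
    (hD : ∀ X ⊆ Icc 1 n, #X = k - 1 → ∃ A ∈ F, ∃ B ∈ F, X = A \ B) (hk : Icc 1 k ∈ F)
    {X : Finset ℕ} (hX : X ⊆ Icc (k + 1) n) (hXc : #X = k - 1) :
    ∃ c ∈ Icc 1 k, insert c X ∈ F := by
  obtain ⟨A, hA, B, -, rfl⟩ := hD X (hX.trans (Icc_subset_Icc (by omega) le_rfl)) hXc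
  obtain ⟨c, -, hcA⟩ :=
    exists_eq_insert_iff.mpr ⟨sdiff_subset, by rw [hXc, hF A hA]; omega⟩
  rw [← hcA] at hA
  exact ⟨c, mem_of_insert_mem_of_disjoint hint hk hA (disjoint_Icc_one_of_subset_Icc_succ hX),
    hA⟩

lemma insert_mem_of_disjoint (hk0 : 0 < k) (hF : ∀ A ∈ F, #A = k)
    (hint : ∀ A ∈ F, ∀ B ∈ F, (A ∩ B).Nonempty)
    (hD : ∀ X ⊆ Icc 1 n, #X = k - 1 → ∃ A ∈ F, ∃ B ∈ F, X = A \ B) (hk : Icc 1 k ∈ F)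
    {x : ℕ} (hx : x ∈ Icc 1 k) {W Z : Finset ℕ} (hW : W ⊆ Icc (k + 1) n)
    (hxW : insert x W ∈ F) (hZ : Z ⊆ Icc (k + 1) n) (hZc : #Z = k - 1) (hWZ : Disjoint W Z) :
    insert x Z ∈ F := by
  obtain ⟨c, hc, hcZ⟩ := exists_insert_mem_of_subset_Icc_succ hk0 hF hint hD hk hZ hZc
  have hxZ : x ∉ Z := disjoint_left.mp (disjoint_Icc_one_of_subset_Icc_succ hZ).symm hx
  have hcxW := mem_of_insert_mem_of_disjoint hint hxW hcZ
    (disjoint_insert_right.mpr ⟨hxZ, hWZ.symm⟩)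
  obtain rfl | hcW := mem_insert.mp hcxW
  · exact hcZ
  · exact absurd hc (disjoint_left.mp (disjoint_Icc_one_of_subset_Icc_succ hW) hcW)

end Family

/-- Key step in the proof of `n ≤ 3k-2`: if `n ≥ 3k-1`, `F` is an intersecting
family of `k`-subsets of `[n]` with every `(k-1)`-subset of `[n]` in `D(F)`,
and `[k] ∈ F`, then for every `(k-1)`-subset `X'` of `[2k, n]` the set
`X' ∪ {1}` belongs to `F`: the members of `F` inside `{1} ∪ [2k, n]` form a
full star centered at `1`. -/
theorem stmt_18 (n k : ℕ) (hn : 3 * k - 1 ≤ n) (F : Finset (Finset ℕ))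
    (hF : ∀ A ∈ F, A ⊆ Finset.Icc 1 n ∧ A.card = k)
    (hint : ∀ A ∈ F, ∀ B ∈ F, (A ∩ B).Nonempty)
    (hD : ∀ X ⊆ Finset.Icc 1 n, X.card = k - 1 →
      ∃ A ∈ F, ∃ B ∈ F, X = A \ B)
    (hk : Finset.Icc 1 k ∈ F) :
    ∀ X' ⊆ Finset.Icc (2 * k) n, X'.card = k - 1 → insert 1 X' ∈ F := by
  intro X' hX' hX'c
  have hk0 : 0 < k := Nat.pos_of_ne_zero (by simpa using (hint _ hk _ hk).ne_empty)
  have hFc : ∀ A ∈ F, #A = k := fun A hA ↦ (hF A hA).2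
  have hX'S : X' ⊆ Icc (k + 1) n := hX'.trans (Icc_subset_Icc (by omega) le_rfl)
  obtain ⟨x, hx, hxX'⟩ := exists_insert_mem_of_subset_Icc_succ hk0 hFc hint hD hk hX'S hX'c
  have hx_star : ∀ W ⊆ Icc (k + 1) n, #W = k - 1 → insert x W ∈ F := fun W hW hWc ↦
    kneser_induction (P := fun W ↦ insert x W ∈ F) (by simp only [Nat.card_Icc]; omega)
      (fun W hW Z hZ _ hZc hWZ hxW ↦
        insert_mem_of_disjoint hk0 hFc hint hD hk hx hW hxW hZ hZc hWZ)
      hX'S hX'c hW hWc hxX'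
  obtain rfl | hx2 : x = 1 ∨ x ∈ Icc 2 k := by rw [mem_Icc] at hx ⊢; omega
  · exact hxX'
  obtain ⟨A, -, B, hB, hAB⟩ :=
    hD (Icc 2 k) (Icc_subset_Icc (by omega) (by omega)) (by simp only [Nat.card_Icc]; omega)
  have hcard : k - 1 ≤ #(Icc (k + 1) n \ B) := by
    have := le_card_sdiff B (Icc (k + 1) n)
    rw [Nat.card_Icc, hFc B hB] at this
    omega
  obtain ⟨W, hW, hWc⟩ := exists_subset_card_eq hcard
  have hxB := mem_of_insert_mem_of_disjoint hint hB
    (hx_star W (hW.trans sdiff_subset) hWc) (disjoint_of_subset_left hW sdiff_disjoint)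
  exact absurd hxB (disjoint_left.mp (hAB ▸ disjoint_sdiff_self_left) hx2)
end
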